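/- Let n be a nonnegative integer and let a, b, c be complex numbers with (a−n)_{2n} ≠ 0, (b)_n ≠ 0, (1−a)_n ≠ 0, (1+c−a)_n ≠ 0, and (1+c−b−n)_{2n} ≠ 0. Then _4F_3(−n, a, a−c−n, c ; (a−n)/2, (1+a−n)/2, b ; 1/4) = [(1+c−a)_n (b−c)_n / ((1−a)_n (b)_n)] · _4F_3(−n, 1+c−b, 1−b−n, c ; (1+c−b−n)/2, (2+c−b−n)/2, 1+c−a ; 1/4), both sides being finite sums over k from 0 to n. -/

import Mathlib

open Finset

/-- The rising factorial (Pochhammer symbol) `(a)_k = a(a+1)⋯(a+k-1)`. -/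
noncomputable def poch (a : ℂ) (k : ℕ) : ℂ := ∏ i ∈ Finset.range k, (a + i)

/-!
Multiply the left side by `(1-a)_n (b)_n`. The duplication formula
`(x)_{2k} = 4^k (x/2)_k ((x+1)/2)_k` absorbs the powers of `1/4`, reflection
`(1-x-m)_m = (-1)^m (x)_m` rewrites `(1-a)_n` and `(b+k)_{n-k}`, and Chu–Vandermonde expands
`(a-n+2k)_{n-k}` against `(c)_k (a-c-n)_k`. What comes out is a double sum that is symmetric
under exchanging `a-c-n` and `1-b-n`, that is under `(a, b) ↦ (1+c-b, 1+c-a)`, and this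
substitution turns the left side into the sum on the right.
-/

open Polynomial

lemma poch_add (x : ℂ) (m k : ℕ) : poch x (m + k) = poch x m * poch (x + m) k := by
  rw [poch, poch, poch, prod_range_add]
  exact congrArg _ (prod_congr rfl fun i _ => by push_cast; ring)

lemma poch_ne_zero_of_le {x : ℂ} {k m : ℕ} (h : poch x m ≠ 0) (hk : k ≤ m) : poch x k ≠ 0 := by
  rw [← Nat.add_sub_cancel' hk, poch_add] at h
  exact left_ne_zero_of_mul h

lemma poch_two_mul (x : ℂ) (k : ℕ) :
    poch x (2 * k) = 4 ^ k * poch (x / 2) k * poch ((x + 1) / 2) k := by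
  induction k with
  | zero => simp [poch]
  | succ k ih =>
    rw [Nat.mul_succ, poch_add, poch_add, poch_add, ih]
    simp only [poch, prod_range_succ, prod_range_zero]
    push_cast; ring

lemma poch_one_sub_sub (x : ℂ) (m : ℕ) : poch (1 - x - m) m = (-1) ^ m * poch x m := by
  rw [poch, poch, ← prod_range_reflect, ← card_range m, ← prod_const, card_range,
    ← prod_mul_distrib]
  refine prod_congr rfl fun i hi => ?_
  rw [Nat.sub_sub, Nat.cast_sub (by simp at hi; omega)]
  push_cast; ring

lemma poch_eq_neg_one_pow_mul_descPochhammer (x : ℂ) (k : ℕ) :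
    poch x k = (-1) ^ k * (descPochhammer ℤ k).smeval (-x) := by
  rw [← aeval_eq_smeval, aeval_def, eval₂_eq_eval_map, descPochhammer_map,
    descPochhammer_eval_eq_prod_range, poch, ← card_range k, ← prod_const, card_range,
    ← prod_mul_distrib]
  exact prod_congr rfl fun _ _ => by ring

lemma poch_add_eq_sum_antidiagonal (x y : ℂ) (m : ℕ) :
    poch (x + y) m = ∑ ij ∈ antidiagonal m, (m.choose ij.1 : ℂ) * poch x ij.1 * poch y ij.2 := by
  simp only [poch_eq_neg_one_pow_mul_descPochhammer, neg_add,
    Ring.descPochhammer_smeval_add m (Commute.all (-x) (-y)), mul_sum]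
  refine sum_congr rfl fun ij hij => ?_
  rw [← mem_antidiagonal.mp hij, pow_add]
  ring

lemma poch_neg_natCast (n k : ℕ) :
    poch (-(n : ℂ)) k = (-1) ^ k * k.factorial * n.choose k := by
  rw [poch_eq_neg_one_pow_mul_descPochhammer, neg_neg, descPochhammer_smeval_eq_descFactorial,
    Nat.descFactorial_eq_factorial_mul_choose]
  push_cast; ring

lemma poch_mul_poch_mul_poch_eq_sum (x y : ℂ) {k n : ℕ} (hk : k ≤ n) :
    poch x k * poch y k * poch (x + y + 2 * k) (n - k) =
      ∑ j ∈ range (n + 1), ((n - k).choose j : ℂ) * poch x (k + j) * poch y (n - j) := by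
  have hsub : range (n - k + 1) ⊆ range (n + 1) := range_subset_range.mpr (by omega)
  rw [show x + y + 2 * k = (x + k) + (y + k) by ring, poch_add_eq_sum_antidiagonal,
    Nat.sum_antidiagonal_eq_sum_range_succ_mk, mul_sum, ← sum_subset hsub]
  · refine sum_congr rfl fun j hj => ?_
    rw [show n - j = k + (n - k - j) by simp at hj; omega, poch_add x, poch_add y]
    ring
  · intro j _ hj
    rw [Nat.choose_eq_zero_of_lt (by simp at hj; omega)]
    simp

/-- The left-hand side `₄F₃(-n, a, a-c-n, c; (a-n)/2, (1+a-n)/2, b; 1/4)`. -/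
noncomputable def quarterSum (n : ℕ) (a b c : ℂ) : ℂ :=
  ∑ k ∈ range (n + 1),
    (poch (-(n : ℂ)) k * poch a k * poch (a - c - (n : ℂ)) k * poch c k) /
      ((Nat.factorial k : ℂ) * poch ((a - (n : ℂ)) / 2) k *
        poch ((1 + a - (n : ℂ)) / 2) k * poch b k) * (1 / 4 : ℂ) ^ k

lemma Nat.choose_mul_choose_sub_comm {n k j : ℕ} (hk : k ≤ n) (hj : j ≤ n) :
    n.choose k * (n - k).choose j = n.choose j * (n - j).choose k := by
  by_cases h : k + j ≤ n
  · have hk' := Nat.choose_mul (n := n) (Nat.le_add_right k j)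
    have hj' := Nat.choose_mul (n := n) (Nat.le_add_left j k)
    simp only [Nat.add_sub_cancel_left, Nat.add_sub_cancel] at hk' hj'
    rw [← hk', ← hj', Nat.choose_symm_add]
  · rw [Nat.choose_eq_zero_of_lt (by omega : n - k < j),
      Nat.choose_eq_zero_of_lt (by omega : n - j < k), Nat.mul_zero, Nat.mul_zero]

/-- With `l = n - k - j` the weight is the multinomial `n! / (k! j! l!)` and the summand is
`(γ)_{k+j} (α)_{k+l} (β)_{j+l}`, so the sum is symmetric in `α` and `β`. -/
noncomputable def multinomialPochSum (n : ℕ) (α β γ : ℂ) : ℂ :=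
  ∑ k ∈ range (n + 1), ∑ j ∈ range (n + 1),
    (n.choose k : ℂ) * ((n - k).choose j : ℂ) * poch γ (k + j) * poch α (n - j) * poch β (n - k)

lemma multinomialPochSum_comm (n : ℕ) (α β γ : ℂ) :
    multinomialPochSum n α β γ = multinomialPochSum n β α γ := by
  rw [multinomialPochSum, multinomialPochSum, sum_comm]
  refine sum_congr rfl fun k hk => sum_congr rfl fun j hj => ?_
  have hchoose : (n.choose j : ℂ) * ((n - j).choose k : ℂ) = n.choose k * (n - k).choose j := by
    exact_mod_cast Nat.choose_mul_choose_sub_comm (by simp at hj; omega) (by simp at hk; omega)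
  rw [hchoose, Nat.add_comm]
  ring

lemma poch_one_sub_mul_poch_mul_div {n k : ℕ} (hk : k ≤ n) (a b : ℂ)
    (ha : poch (a - n) (2 * k) ≠ 0) (hb : poch b k ≠ 0) :
    poch (1 - a) n * poch b n *
        (poch (-(n : ℂ)) k * poch a k / (k.factorial * poch (a - n) (2 * k) * poch b k)) =
      n.choose k * poch (a - n + 2 * k) (n - k) * poch (1 - b - n) (n - k) := by
  have hfac : (k.factorial : ℂ) ≠ 0 := Nat.cast_ne_zero.mpr k.factorial_ne_zero
  have hA : poch (1 - a) n = (-1) ^ n * poch (a - n) n := by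
    rw [← poch_one_sub_sub]; ring_nf
  have hAk : poch (a - n) n * poch a k = poch (a - n) (2 * k) * poch (a - n + 2 * k) (n - k) := by
    calc poch (a - n) n * poch a k = poch (a - n) (n + k) := by rw [poch_add, sub_add_cancel]
      _ = poch (a - n) (2 * k + (n - k)) := by congr 1; omega
      _ = _ := by rw [poch_add]; push_cast; rfl
  have hB : poch b n = poch b k * ((-1) ^ (n - k) * poch (1 - b - n) (n - k)) := by
    rw [← poch_one_sub_sub, Nat.cast_sub hk, show 1 - (1 - b - n) - (n - k) = b + k by ring,
      ← poch_add, Nat.add_sub_cancel' hk]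
  have hsign : ((-1 : ℂ) ^ n) * ((-1) ^ k * (-1) ^ (n - k)) = 1 := by
    rw [← pow_add, Nat.add_sub_cancel' hk, ← mul_pow]; norm_num
  rw [hA, hB, poch_neg_natCast]
  field_simp
  linear_combination (poch (1 - b - n) (n - k) * n.choose k * poch (a - n) n * poch a k) * hsign
    + (poch (1 - b - n) (n - k) * n.choose k) * hAk

lemma poch_one_sub_mul_poch_mul_quarterSum (n : ℕ) (a b c : ℂ)
    (ha : poch (a - n) (2 * n) ≠ 0) (hb : poch b n ≠ 0) :
    poch (1 - a) n * poch b n * quarterSum n a b c =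
      multinomialPochSum n (a - c - n) (1 - b - n) c := by
  rw [quarterSum, multinomialPochSum, mul_sum]
  refine sum_congr rfl fun k hk => ?_
  have hkn : k ≤ n := Nat.lt_succ_iff.mp (mem_range.mp hk)
  have hexpand := poch_mul_poch_mul_poch_eq_sum c (a - c - n) hkn
  rw [show c + (a - c - n) + 2 * k = a - n + 2 * k by ring] at hexpand
  calc
    _ = poch (1 - a) n * poch b n *
          (poch (-(n : ℂ)) k * poch a k / (k.factorial * poch (a - n) (2 * k) * poch b k)) *
          (poch (a - c - n) k * poch c k) := by
      rw [poch_two_mul, div_pow, one_pow, show (a - n + 1) / 2 = (1 + a - n) / 2 by ring]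
      ring
    _ = n.choose k * poch (1 - b - n) (n - k) *
          (poch c k * poch (a - c - n) k * poch (a - n + 2 * k) (n - k)) := by
      rw [poch_one_sub_mul_poch_mul_div hkn a b (poch_ne_zero_of_le ha (by omega))
        (poch_ne_zero_of_le hb hkn)]
      ring
    _ = _ := by
      rw [hexpand, mul_sum]
      exact sum_congr rfl fun j _ => by ring

theorem stmt_13 (n : ℕ) (a b c : ℂ)
    (han : poch (a - (n : ℂ)) (2 * n) ≠ 0) (hb : poch b n ≠ 0)
    (h1a : poch (1 - a) n ≠ 0) (hca : poch (1 + c - a) n ≠ 0)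
    (hcb : poch (1 + c - b - (n : ℂ)) (2 * n) ≠ 0) :
    ∑ k ∈ range (n + 1),
      (poch (-(n : ℂ)) k * poch a k * poch (a - c - (n : ℂ)) k * poch c k) /
        ((Nat.factorial k : ℂ) * poch ((a - (n : ℂ)) / 2) k *
          poch ((1 + a - (n : ℂ)) / 2) k * poch b k) * (1 / 4 : ℂ) ^ k
    = poch (1 + c - a) n * poch (b - c) n / (poch (1 - a) n * poch b n) *
      ∑ k ∈ range (n + 1),
        (poch (-(n : ℂ)) k * poch (1 + c - b) k * poch (1 - b - (n : ℂ)) k * poch c k) /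
          ((Nat.factorial k : ℂ) * poch ((1 + c - b - (n : ℂ)) / 2) k *
            poch ((2 + c - b - (n : ℂ)) / 2) k * poch (1 + c - a) k) *
          (1 / 4 : ℂ) ^ k := by
  have hL := poch_one_sub_mul_poch_mul_quarterSum n a b c han hb
  have hR := poch_one_sub_mul_poch_mul_quarterSum n (1 + c - b) (1 + c - a) c hcb hca
  rw [multinomialPochSum_comm] at hR
  simp only [quarterSum] at hL hR
  rw [show (1 : ℂ) + c - b - c - n = 1 - b - n by ring,
    show (1 : ℂ) - (1 + c - a) - n = a - c - n by ring,
    show (1 : ℂ) - (1 + c - b) = b - c by ring,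
    show (1 + (1 + c - b) - n) / 2 = (2 + c - b - n) / 2 by ring] at hR
  rw [div_mul_eq_mul_div, eq_div_iff (mul_ne_zero h1a hb)]
  linear_combination hL - hR
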